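/- arXiv:1708.04144 — 6 statements merged into one kernel-verified Lean document; each statement's English description precedes it below -/
import Mathlib

section
/- Let A, S, P₀ be real n×n matrices. Define P : ℝ → Matrix (Fin n) (Fin n) ℝ by P(t) = exp(tA) * P₀ * exp(tAᵀ) + ∫ s in (0)..(t), exp(sA) * (S * Sᵀ) * exp(sAᵀ) ds. Then P(0) = P₀ and for every t ∈ ℝ, P is differentiable at t with derivative P'(t) = A * P(t) + P(t) * Aᵀ + S * Sᵀ. (Solution formula for the differential Lyapunov equation governing the covariance of the additive-noise SPDE model.) -/
/-!
Write `g(s) = exp(sA) Q exp(sB)` and `L X = A X + X B`. Then `g' = L g`, so `t ↦ exp(tA) P₀ exp(tB)`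
solves the homogeneous equation `X' = L X`, while integrating `g' = L g` and pulling the continuous
linear map `L` out of the integral gives `L (∫₀ᵗ g) = g(t) - Q`. Hence the derivative `g(t)` of
`∫₀ᵗ g` equals `L (∫₀ᵗ g) + Q`, which is the inhomogeneous equation `X' = L X + Q`.
-/

open scoped Matrix
open NormedSpace MeasureTheory

attribute [local instance] Matrix.linftyOpNormedRing Matrix.linftyOpNormedAlgebra

section SylvesterOp

variable {𝕂 𝔸 : Type*} [RCLike 𝕂] [NormedRing 𝔸] [NormedAlgebra 𝕂 𝔸]

variable (𝕂) in
noncomputable def sylvesterOp (A B : 𝔸) : 𝔸 →L[𝕂] 𝔸 :=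
  ContinuousLinearMap.mul 𝕂 𝔸 A + (ContinuousLinearMap.mul 𝕂 𝔸).flip B

@[simp]
theorem sylvesterOp_apply (A B X : 𝔸) : sylvesterOp 𝕂 A B X = A * X + X * B := rfl

variable [CompleteSpace 𝔸]

theorem hasDerivAt_exp_smul_mul_mul_exp_smul (A B M : 𝔸) (t : 𝕂) :
    HasDerivAt (fun u : 𝕂 => exp (u • A) * M * exp (u • B))
      (sylvesterOp 𝕂 A B (exp (t • A) * M * exp (t • B))) t := by
  refine (((hasDerivAt_exp_smul_const' A t).mul_const M).mul
    (hasDerivAt_exp_smul_const B t)).congr_deriv ?_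
  simp only [sylvesterOp_apply]
  noncomm_ring

theorem continuous_exp_smul_mul_mul_exp_smul (A B M : 𝔸) :
    Continuous fun u : 𝕂 => exp (u • A) * M * exp (u • B) :=
  continuous_iff_continuousAt.2 fun u =>
    (hasDerivAt_exp_smul_mul_mul_exp_smul A B M u).continuousAt

end SylvesterOp

section Lyapunov

variable {𝔸 : Type*} [NormedRing 𝔸] [NormedAlgebra ℝ 𝔸] [CompleteSpace 𝔸]

theorem sylvesterOp_integral_exp_smul_mul_mul_exp_smul (A B M : 𝔸) (t : ℝ) :
    sylvesterOp ℝ A B (∫ s in (0 : ℝ)..t, exp (s • A) * M * exp (s • B)) =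
      exp (t • A) * M * exp (t • B) - M := by
  have hcont := continuous_exp_smul_mul_mul_exp_smul (𝕂 := ℝ) A B M
  rw [← (sylvesterOp ℝ A B).intervalIntegral_comp_comm (hcont.intervalIntegrable _ _),
    intervalIntegral.integral_eq_sub_of_hasDerivAt
      (fun s _ => hasDerivAt_exp_smul_mul_mul_exp_smul A B M s)
      (((sylvesterOp ℝ A B).continuous.comp hcont).intervalIntegrable _ _)]
  simp

theorem hasDerivAt_of_eq_exp_smul_mul_mul_exp_smul_add_integral (A B P₀ Q : 𝔸) (P : ℝ → 𝔸)
    (hP : ∀ t : ℝ, P t =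
      exp (t • A) * P₀ * exp (t • B) + ∫ s in (0 : ℝ)..t, exp (s • A) * Q * exp (s • B))
    (t : ℝ) : HasDerivAt P (A * P t + P t * B + Q) t := by
  have hcont := continuous_exp_smul_mul_mul_exp_smul (𝕂 := ℝ) A B Q
  have hintegral := intervalIntegral.integral_hasDerivAt_right (a := 0)
    (hcont.intervalIntegrable 0 t) (hcont.stronglyMeasurableAtFilter _ _) hcont.continuousAt
  have hkey := sylvesterOp_integral_exp_smul_mul_mul_exp_smul A B Q t
  rw [funext hP]
  refine ((hasDerivAt_exp_smul_mul_mul_exp_smul A B P₀ t).add hintegral).congr_deriv ?_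
  rw [eq_sub_iff_add_eq] at hkey
  simp only [sylvesterOp_apply] at hkey ⊢
  rw [← hkey]
  noncomm_ring

end Lyapunov

/-- Solution formula for the differential Lyapunov equation
`Ṗ(t) = A P(t) + P(t) Aᵀ + S Sᵀ` governing the covariance of the
additive-noise SPDE model. -/
theorem lyapunov_solution_formula (n : ℕ) (A S P₀ : Matrix (Fin n) (Fin n) ℝ)
    (P : ℝ → Matrix (Fin n) (Fin n) ℝ)
    (hP : ∀ t : ℝ, P t =
      exp (t • A) * P₀ * exp (t • Aᵀ) +
        ∫ s in (0:ℝ)..t, exp (s • A) * (S * Sᵀ) * exp (s • Aᵀ)) :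
    P 0 = P₀ ∧ ∀ t : ℝ, HasDerivAt P (A * P t + P t * Aᵀ + S * Sᵀ) t :=
  ⟨by simp [hP], hasDerivAt_of_eq_exp_smul_mul_mul_exp_smul_add_integral A Aᵀ P₀ (S * Sᵀ) P hP⟩
end

section
/- Let A, S, P₀ be real n×n matrices and let Q : ℝ → Matrix (Fin n) (Fin n) ℝ be differentiable with Q(0) = P₀ and Q'(t) = A * Q(t) + Q(t) * Aᵀ + S * Sᵀ for every t ∈ ℝ. Then for every t ∈ ℝ, Q(t) = exp(tA) * P₀ * exp(tAᵀ) + ∫ s in (0)..(t), exp(sA) * (S * Sᵀ) * exp(sAᵀ) ds. (Uniqueness of the solution of the differential Lyapunov equation.) -/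
open scoped Matrix
open NormedSpace MeasureTheory

attribute [local instance] Matrix.linftyOpNormedRing Matrix.linftyOpNormedAlgebra

/-!
Both `Q` and the variation-of-constants formula solve the Sylvester equation
`X' = A X + X B + C` (here `B = Aᵀ`, `C = S Sᵀ`) with the same initial value. The difference `D`
of two solutions solves the homogeneous equation, so `exp (-t A) D(t) exp (-t B)` has derivative
zero and vanishes identically; since exponentials are units, `D = 0`.
-/

section Sylvester

variable {𝔸 : Type*} [NormedRing 𝔸] [NormedAlgebra ℝ 𝔸]

theorem isUnit_exp_of_normedAlgebra_real [CompleteSpace 𝔸] (x : 𝔸) : IsUnit (exp x) :=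
  isUnit_exp_of_mem_ball (𝕂 := ℝ) <| (expSeries_radius_eq_top ℝ 𝔸).symm ▸ edist_lt_top _ _

theorem sylvester_ode_unique [CompleteSpace 𝔸] {A B C : 𝔸} {X Y : ℝ → 𝔸}
    (hX : ∀ t, HasDerivAt X (A * X t + X t * B + C) t)
    (hY : ∀ t, HasDerivAt Y (A * Y t + Y t * B + C) t) (h0 : X 0 = Y 0) (t : ℝ) :
    X t = Y t := by
  let G : ℝ → 𝔸 := fun s => exp (s • -A) * (X s - Y s) * exp (s • -B)
  have hG : ∀ s, HasDerivAt G 0 s := by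
    intro s
    refine ((hasDerivAt_exp_smul_const (-A) s).mul ((hX s).sub (hY s))).mul
      (hasDerivAt_exp_smul_const' (-B) s) |>.congr_deriv ?_
    simp only [Pi.mul_apply, Pi.sub_apply]
    noncomm_ring
  have hGt : G t = 0 := by
    rw [is_const_of_deriv_eq_zero (fun s => (hG s).differentiableAt) (fun s => (hG s).deriv) t 0]
    simp [G, h0]
  rwa [(isUnit_exp_of_normedAlgebra_real _).mul_left_eq_zero,
    (isUnit_exp_of_normedAlgebra_real _).mul_right_eq_zero, sub_eq_zero] at hGt

noncomputable def sylvesterSolution (A B C P : 𝔸) (t : ℝ) : 𝔸 :=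
  exp (t • A) * P * exp (t • B) + ∫ s in (0 : ℝ)..t, exp (s • A) * C * exp (s • B)

theorem sylvesterSolution_zero (A B C P : 𝔸) : sylvesterSolution A B C P 0 = P := by
  simp [sylvesterSolution]

theorem hasDerivAt_sylvesterSolution [CompleteSpace 𝔸] (A B C P : 𝔸) (t : ℝ) :
    HasDerivAt (sylvesterSolution A B C P)
      (A * sylvesterSolution A B C P t + sylvesterSolution A B C P t * B + C) t := by
  let g : ℝ → 𝔸 := fun s => exp (s • A) * C * exp (s • B)
  let I : ℝ → 𝔸 := fun r => ∫ s in (0 : ℝ)..r, g s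
  have hg : ∀ s, HasDerivAt g (A * g s + g s * B) s := fun s => by
    refine ((hasDerivAt_exp_smul_const' A s).mul_const C).mul (hasDerivAt_exp_smul_const B s)
      |>.congr_deriv ?_
    simp only [g, mul_assoc]
  have hI : ∀ s, HasDerivAt I (g s) s := fun s =>
    (continuous_iff_continuousAt.mpr fun r => (hg r).continuousAt).integral_hasStrictDerivAt 0 s
      |>.hasDerivAt
  -- Both sides have derivative `A g + g B` and agree at `0`.
  have key : A * I t + I t * B + C = g t := by
    let K : ℝ → 𝔸 := fun s => A * I s + I s * B + C - g s
    have hK : ∀ s, HasDerivAt K 0 s := fun s =>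
      (((hI s).const_mul A).add ((hI s).mul_const B)).add_const C |>.sub (hg s)
        |>.congr_deriv (sub_self _)
    have := is_const_of_deriv_eq_zero (fun s => (hK s).differentiableAt) (fun s => (hK s).deriv) t 0
    simpa [K, I, g, sub_eq_zero] using this
  refine (((hasDerivAt_exp_smul_const' A t).mul_const P).mul
    (hasDerivAt_exp_smul_const B t)).add (hI t) |>.congr_deriv ?_
  change _ = A * (exp (t • A) * P * exp (t • B) + I t) + (exp (t • A) * P * exp (t • B) + I t) * B + C
  rw [← key]
  noncomm_ring

end Sylvester

/-- Uniqueness of the solution of the differential Lyapunov equation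
`Q̇(t) = A Q(t) + Q(t) Aᵀ + S Sᵀ`, `Q(0) = P₀`. -/
theorem lyapunov_solution_unique (n : ℕ) (A S P₀ : Matrix (Fin n) (Fin n) ℝ)
    (Q : ℝ → Matrix (Fin n) (Fin n) ℝ)
    (hQ0 : Q 0 = P₀)
    (hQ : ∀ t : ℝ, HasDerivAt Q (A * Q t + Q t * Aᵀ + S * Sᵀ) t) :
    ∀ t : ℝ, Q t =
      exp (t • A) * P₀ * exp (t • Aᵀ) +
        ∫ s in (0:ℝ)..t, exp (s • A) * (S * Sᵀ) * exp (s • Aᵀ) :=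
  sylvester_ode_unique hQ (hasDerivAt_sylvesterSolution A Aᵀ (S * Sᵀ) P₀)
    (hQ0.trans (sylvesterSolution_zero A Aᵀ (S * Sᵀ) P₀).symm)
end

section
/- Let A be a real n×n matrix and let 𝓛₁ : Matrix (Fin n) (Fin n) ℝ →L[ℝ] Matrix (Fin n) (Fin n) ℝ be the continuous linear map 𝓛₁(P) = A * P + P * Aᵀ. Then for every t ∈ ℝ and every n×n matrix P₀, (exp(t • 𝓛₁)) P₀ = exp(tA) * P₀ * exp(tAᵀ), where the exponential on the left is the exponential of a continuous linear operator on the space of n×n matrices. (Operator-exponential form of the exact flow T₁ used in the splitting scheme.) -/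
open scoped Matrix
open NormedSpace

attribute [local instance] Matrix.linftyOpNormedRing Matrix.linftyOpNormedAlgebra

instance instIsTopologicalRingMatrixCLM (n : ℕ) :
    IsTopologicalRing (Matrix (Fin n) (Fin n) ℝ →L[ℝ] Matrix (Fin n) (Fin n) ℝ) :=
  @NonUnitalSeminormedRing.toIsTopologicalRing _
    (@ContinuousLinearMap.toNormedRing ℝ (Matrix (Fin n) (Fin n) ℝ)
      Matrix.linftyOpNormedAddCommGroup _
      Matrix.linftyOpNormedAlgebra.toNormedSpace).toNonUnitalNormedRing.toNonUnitalSeminormedRing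

/-! Write `𝓛₁ = L_A + R_{Aᵀ}` with `L_a x = a * x` and `R_b x = x * b`. Left and right
multiplications commute, so `exp (t • 𝓛₁) = exp (L_{tA}) * exp (R_{tAᵀ})`. Since `a ↦ L_a` is a
continuous ring homomorphism, and `b ↦ R_b` is one from the opposite algebra, both intertwine the
exponentials: `exp (L_a) = L_{exp a}` and `exp (R_b) = R_{exp b}`. -/

namespace ContinuousLinearMap

section RingHom

variable (𝕜 𝔸 : Type*) [NontriviallyNormedField 𝕜] [NormedRing 𝔸] [NormedAlgebra 𝕜 𝔸]

noncomputable def mulLeftRingHom : 𝔸 →+* (𝔸 →L[𝕜] 𝔸) where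
  toFun := mul 𝕜 𝔸
  map_one' := ext one_mul
  map_mul' a b := ext (mul_assoc a b)
  map_zero' := map_zero _
  map_add' := map_add _

@[simps]
noncomputable def mulRightRingHom : 𝔸ᵐᵒᵖ →+* (𝔸 →L[𝕜] 𝔸) where
  toFun b := (mul 𝕜 𝔸).flip b.unop
  map_one' := ext mul_one
  map_mul' a b := ext fun x => (mul_assoc x b.unop a.unop).symm
  map_zero' := map_zero _
  map_add' a b := map_add _ a.unop b.unop

variable {𝕜 𝔸}

theorem continuous_mulLeftRingHom : Continuous (mulLeftRingHom 𝕜 𝔸) :=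
  (mul 𝕜 𝔸).continuous

theorem continuous_mulRightRingHom : Continuous (mulRightRingHom 𝕜 𝔸) :=
  (mul 𝕜 𝔸).flip.continuous.comp MulOpposite.continuous_unop

theorem commute_mul_flip_mul (a b : 𝔸) : Commute (mul 𝕜 𝔸 a) ((mul 𝕜 𝔸).flip b) :=
  ext fun x => (mul_assoc a x b).symm

end RingHom

section Exp

variable {𝕜 𝔸 : Type*} [RCLike 𝕜] [NormedRing 𝔸] [NormedAlgebra 𝕜 𝔸] [CompleteSpace 𝔸]

theorem exp_mul (a : 𝔸) : exp (mul 𝕜 𝔸 a) = mul 𝕜 𝔸 (exp a) :=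
  let := NormedAlgebra.restrictScalars ℚ 𝕜 𝔸
  (map_exp (mulLeftRingHom 𝕜 𝔸) continuous_mulLeftRingHom a).symm

theorem exp_flip_mul (b : 𝔸) : exp ((mul 𝕜 𝔸).flip b) = (mul 𝕜 𝔸).flip (exp b) := by
  let := NormedAlgebra.restrictScalars ℚ 𝕜 𝔸
  simpa using (map_exp (mulRightRingHom 𝕜 𝔸) continuous_mulRightRingHom (.op b)).symm

theorem exp_apply_of_apply_eq {L : 𝔸 →L[𝕜] 𝔸} {a b : 𝔸} (hL : ∀ x, L x = a * x + x * b)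
    (x : 𝔸) : exp L x = exp a * x * exp b := by
  let := NormedAlgebra.restrictScalars ℚ 𝕜 (𝔸 →L[𝕜] 𝔸)
  have hL' : L = mul 𝕜 𝔸 a + (mul 𝕜 𝔸).flip b := ext hL
  rw [hL', exp_add_of_commute (commute_mul_flip_mul a b), exp_mul, exp_flip_mul]
  exact (mul_assoc _ _ _).symm

end Exp

end ContinuousLinearMap

/-- Operator-exponential form of the exact flow `T₁` used in the splitting scheme:
for `𝓛₁(P) = A P + P Aᵀ` one has `exp(t 𝓛₁) P₀ = exp(tA) P₀ exp(tAᵀ)`. -/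
theorem operator_exp_flow_T1 (n : ℕ) (A : Matrix (Fin n) (Fin n) ℝ)
    (𝓛₁ : Matrix (Fin n) (Fin n) ℝ →L[ℝ] Matrix (Fin n) (Fin n) ℝ)
    (h𝓛₁ : ∀ P : Matrix (Fin n) (Fin n) ℝ, 𝓛₁ P = A * P + P * Aᵀ) :
    ∀ (t : ℝ) (P₀ : Matrix (Fin n) (Fin n) ℝ),
      exp (t • 𝓛₁) P₀ = exp (t • A) * P₀ * exp (t • Aᵀ) := by
  intro t P₀
  refine ContinuousLinearMap.exp_apply_of_apply_eq (fun P => ?_) P₀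
  -- `smul_apply` does not fire: the goal mixes the plain and the normed-ring instances
  change t • 𝓛₁ P = _
  rw [h𝓛₁, smul_add, smul_mul_assoc, mul_smul_comm]
end

section
/- Let S be a real n×n matrix and let 𝓛₂ : Matrix (Fin n) (Fin n) ℝ →L[ℝ] Matrix (Fin n) (Fin n) ℝ be the continuous linear map 𝓛₂(P) = S * P * Sᵀ. Then for every t ∈ ℝ and every n×n matrix P₀, (exp(t • 𝓛₂)) P₀ = ∑_{k=0}^{∞} (t^k / k!) • (S^k * P₀ * (Sᵀ)^k), the series converging in the normed space of n×n real matrices. (Exact solution flow T₂ of the second splitting subproblem Ṗ = SPSᵀ.) -/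
open scoped Matrix
open NormedSpace

attribute [local instance] Matrix.linftyOpNormedRing Matrix.linftyOpNormedAlgebra

instance matrixCLM_isTopologicalRing (n : ℕ) :
    IsTopologicalRing (Matrix (Fin n) (Fin n) ℝ →L[ℝ] Matrix (Fin n) (Fin n) ℝ) :=
  @NonUnitalSeminormedRing.toIsTopologicalRing _
    (@NonUnitalNormedRing.toNonUnitalSeminormedRing _
      (@NormedRing.toNonUnitalNormedRing _ ContinuousLinearMap.toNormedRing))

theorem ContinuousLinearMap.hasSum_exp_smul_apply {𝕂 E : Type*} [RCLike 𝕂] [NormedAddCommGroup E]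
    [NormedSpace 𝕂 E] [CompleteSpace E] (L : E →L[𝕂] E) (t : 𝕂) (x : E) :
    HasSum (fun k : ℕ => (t ^ k / k.factorial) • (L ^ k) x) (exp (t • L) x) := by
  simpa only [apply_apply, smul_apply, smul_pow, smul_smul, div_eq_inv_mul] using
    (exp_series_hasSum_exp' (𝕂 := 𝕂) (t • L)).mapL (apply 𝕂 E x)

theorem ContinuousLinearMap.pow_apply_eq_pow_mul_mul_pow {𝕜 R : Type*} [Semiring 𝕜] [Semiring R]
    [TopologicalSpace R] [Module 𝕜 R] {L : R →L[𝕜] R} {a b : R} (hL : ∀ x, L x = a * x * b)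
    (k : ℕ) (x : R) : (L ^ k) x = a ^ k * x * b ^ k := by
  induction k generalizing x with
  | zero => simp
  | succ k ih =>
    rw [pow_succ', mul_apply_eq_comp, ih, hL, pow_succ' a, pow_succ b]
    simp only [mul_assoc]

/-- Exact solution flow `T₂` of the second splitting subproblem `Ṗ = S P Sᵀ`:
`exp(t 𝓛₂) P₀ = ∑_{k} (tᵏ/k!) • (Sᵏ P₀ (Sᵀ)ᵏ)`. -/
theorem operator_exp_flow_T2 (n : ℕ) (S : Matrix (Fin n) (Fin n) ℝ)
    (𝓛₂ : Matrix (Fin n) (Fin n) ℝ →L[ℝ] Matrix (Fin n) (Fin n) ℝ)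
    (h𝓛₂ : ∀ P : Matrix (Fin n) (Fin n) ℝ, 𝓛₂ P = S * P * Sᵀ) :
    ∀ (t : ℝ) (P₀ : Matrix (Fin n) (Fin n) ℝ),
      exp (t • 𝓛₂) P₀ =
        ∑' k : ℕ, (t ^ k / (Nat.factorial k : ℝ)) • (S ^ k * P₀ * (Sᵀ) ^ k) := by
  intro t P₀
  simp only [← ContinuousLinearMap.pow_apply_eq_pow_mul_mul_pow h𝓛₂]
  exact ((𝓛₂.hasSum_exp_smul_apply t P₀).tsum_eq).symm
end

section
/- Let A, S, P₀ be real n×n matrices, h ≥ 0, s a natural number, and let w : Fin s → ℝ with wₖ ≥ 0 and τ : Fin s → ℝ be quadrature weights and nodes. Form the n×(n + s·n) block matrix P₁ = [exp(hA) * P₀, √(h w₁) • exp(τ₁ A) * S, …, √(h wₛ) • exp(τₛ A) * S]. Then P₁ * P₁ᵀ = exp(hA) * (P₀ * P₀ᵀ) * exp(hAᵀ) + h • ∑_{k} wₖ • (exp(τₖ A) * (S * Sᵀ) * exp(τₖ Aᵀ)). (The low-rank factor produced by the quadrature scheme reproduces exactly the quadrature approximation of the Lyapunov solution formula.) -/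
/-!
Stacking the blocks `Bₖ` side by side gives `[B₁ … Bₛ] [B₁ … Bₛ]ᵀ = ∑ₖ Bₖ Bₖᵀ`. With
`Bₖ = √(h wₖ) exp(τₖ A) S` the square root cancels against its own square, and
`exp(τ Aᵀ) = exp(τ A)ᵀ` turns each `Bₖ Bₖᵀ` into the quadrature term.
-/

open scoped Matrix
open NormedSpace

namespace Matrix

theorem of_blocks_mul_transpose {m ι κ R : Type*} [Fintype ι] [Fintype κ] [CommSemiring R]
    (B : κ → Matrix m ι R) :
    (of fun i (p : κ × ι) => B p.1 i p.2) * (of fun i (p : κ × ι) => B p.1 i p.2)ᵀ =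
      ∑ k, B k * (B k)ᵀ := by
  ext i j
  simp only [mul_apply, transpose_apply, of_apply, sum_apply, Fintype.sum_prod_type]

theorem exp_smul_transpose {m 𝕜 : Type*} [Fintype m] [DecidableEq m] [RCLike 𝕜] (t : 𝕜)
    (A : Matrix m m 𝕜) : exp (t • Aᵀ) = (exp (t • A))ᵀ := by
  rw [← transpose_smul, exp_transpose]

theorem exp_mul_mul_exp_transpose {m 𝕜 : Type*} [Fintype m] [DecidableEq m] [RCLike 𝕜]
    (t : 𝕜) (A M : Matrix m m 𝕜) :
    exp (t • A) * (M * Mᵀ) * exp (t • Aᵀ) = exp (t • A) * M * (exp (t • A) * M)ᵀ := by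
  rw [exp_smul_transpose, transpose_mul, Matrix.mul_assoc, Matrix.mul_assoc, Matrix.mul_assoc]

end Matrix

open Matrix in
/-- The low-rank factor
`P₁ = [exp(hA) P₀, √(h w₁) exp(τ₁ A) S, …, √(h wₛ) exp(τₛ A) S]`
produced by the quadrature scheme reproduces exactly the quadrature approximation of
the Lyapunov solution formula. -/
theorem lowrank_factor_quadrature (n s : ℕ) (A S P₀ : Matrix (Fin n) (Fin n) ℝ)
    (h : ℝ) (hh : 0 ≤ h) (w : Fin s → ℝ) (hw : ∀ k, 0 ≤ w k) (τ : Fin s → ℝ)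
    (P₁ : Matrix (Fin n) (Fin n ⊕ (Fin s × Fin n)) ℝ)
    (hP₁ : P₁ = Matrix.fromCols (exp (h • A) * P₀)
      (Matrix.of fun i (p : Fin s × Fin n) =>
        (Real.sqrt (h * w p.1) • (exp (τ p.1 • A) * S)) i p.2)) :
    P₁ * P₁ᵀ =
      exp (h • A) * (P₀ * P₀ᵀ) * exp (h • Aᵀ) +
        h • ∑ k : Fin s, w k • (exp (τ k • A) * (S * Sᵀ) * exp (τ k • Aᵀ)) := by
  subst hP₁
  rw [transpose_fromCols, fromCols_mul_fromRows,
    of_blocks_mul_transpose fun k => √(h * w k) • (exp (τ k • A) * S),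
    exp_mul_mul_exp_transpose, Finset.smul_sum]
  congr 1
  refine Finset.sum_congr rfl fun k _ => ?_
  rw [exp_mul_mul_exp_transpose, transpose_smul, smul_mul_smul, smul_smul,
    Real.mul_self_sqrt (mul_nonneg hh (hw k))]
end

section
/- Let A, S, P₀ be real n×n matrices and suppose there exist constants C ≥ 0 and λ > 0 such that ‖exp(tA)‖ ≤ C * Real.exp(−λ t) for all t ≥ 0. Define P(t) = exp(tA) * P₀ * exp(tAᵀ) + ∫ s in (0)..(t), exp(sA) * (S * Sᵀ) * exp(sAᵀ) ds and P∞ = ∫ s in Set.Ici (0:ℝ), exp(sA) * (S * Sᵀ) * exp(sAᵀ) ds. Then P(t) tends to P∞ as t → ∞. (Under stability of A, the covariance of the additive-noise model converges to the stationary covariance appearing in the fluctuation–dissipation relation.) -/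
/-!
Transposition is a bounded linear map, so the decay `exp (t • A) = O(e^{-λt})` transfers to
`exp (t • Aᵀ) = (exp (t • A))ᵀ`, and every product `exp (t • A) * M * exp (t • Aᵀ)` is
`O(e^{-2λt})`. Taking `M = P₀` the transient term vanishes; taking `M = S * Sᵀ` the integrand is
integrable on `(0, ∞)`, so its integrals over `[0, t]` converge to the one over `[0, ∞)`.
-/

open scoped Matrix
open NormedSpace MeasureTheory Filter Asymptotics Set

attribute [local instance] Matrix.linftyOpNormedRing Matrix.linftyOpNormedAlgebra

theorem integrableOn_Ioi_of_isBigO_exp_neg {E : Type*} [NormedAddCommGroup E]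
    {f : ℝ → E} {a b : ℝ} (hb : 0 < b) (hf : ContinuousOn f (Ici a))
    (ho : f =O[atTop] fun x => Real.exp (-b * x)) : IntegrableOn f (Ioi a) :=
  integrableOn_Ici_iff_integrableOn_Ioi (by finiteness) |>.mp <|
    (hf.locallyIntegrableOn measurableSet_Ici).integrableOn_of_isBigO_atTop
    ho ⟨Ioi b, Ioi_mem_atTop b, exp_neg_integrableOn_Ioi b hb⟩

theorem tendsto_zero_of_isBigO_exp_neg {E : Type*} [NormedAddCommGroup E]
    {f : ℝ → E} {b : ℝ} (hb : 0 < b)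
    (ho : f =O[atTop] fun x => Real.exp (-b * x)) : Tendsto f atTop (nhds 0) :=
  ho.trans_tendsto <| Real.tendsto_exp_atBot.comp <|
    tendsto_id.const_mul_atTop_of_neg (neg_neg_iff_pos.2 hb)

theorem Matrix.isBigO_transpose {m 𝕜 α : Type*} [Fintype m] [DecidableEq m]
    [NontriviallyNormedField 𝕜] [CompleteSpace 𝕜] (f : α → Matrix m m 𝕜) (l : Filter α) :
    (fun x => (f x)ᵀ) =O[l] f :=
  (LinearMap.toContinuousLinearMap
    (Matrix.transposeLinearEquiv m m 𝕜 𝕜).toLinearMap).isBigO_comp f l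

theorem Matrix.isBigO_mul_mul_transpose {m 𝕜 α : Type*} [Fintype m] [DecidableEq m]
    [NontriviallyNormedField 𝕜] [CompleteSpace 𝕜] {f : α → Matrix m m 𝕜} {g : α → ℝ}
    {l : Filter α} (hf : f =O[l] g) (M : Matrix m m 𝕜) :
    (fun x => f x * M * (f x)ᵀ) =O[l] fun x => g x * g x := by
  have := (hf.mul (isBigO_const_const M one_ne_zero l)).mul
    ((Matrix.isBigO_transpose f l).trans hf)
  simpa only [mul_one] using this

theorem isBigO_exp_smul_mul_mul_exp_smul_transpose {m : Type*} [Fintype m] [DecidableEq m]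
    {A : Matrix m m ℝ} {lam : ℝ}
    (hA : (fun t : ℝ => exp (t • A)) =O[atTop] fun t => Real.exp (-lam * t))
    (M : Matrix m m ℝ) :
    (fun t : ℝ => exp (t • A) * M * exp (t • Aᵀ)) =O[atTop]
      fun t => Real.exp (-(2 * lam) * t) := by
  have := Matrix.isBigO_mul_mul_transpose hA M
  simp only [← Real.exp_add] at this
  convert this using 3 with t t
  · rw [← Matrix.transpose_smul, Matrix.exp_transpose]
  · ring_nf

theorem covariance_tendsto_stationary_general (n : ℕ) (A S P₀ : Matrix (Fin n) (Fin n) ℝ)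
    (C lam : ℝ) (hlam : 0 < lam)
    (hstab : ∀ t : ℝ, 0 ≤ t → ‖exp (t • A)‖ ≤ C * Real.exp (-lam * t))
    (P : ℝ → Matrix (Fin n) (Fin n) ℝ)
    (hP : ∀ t : ℝ, P t =
      exp (t • A) * P₀ * exp (t • Aᵀ) +
        ∫ s in (0:ℝ)..t, exp (s • A) * (S * Sᵀ) * exp (s • Aᵀ)) :
    Tendsto P atTop
      (nhds (∫ s in Set.Ici (0:ℝ), exp (s • A) * (S * Sᵀ) * exp (s • Aᵀ))) := by
  have hA : (fun t : ℝ => exp (t • A)) =O[atTop] fun t => Real.exp (-lam * t) :=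
    .of_bound C <| (eventually_ge_atTop 0).mono fun t ht => by
      simpa only [Real.norm_eq_abs, abs_of_pos (Real.exp_pos _)] using hstab t ht
  have h2lam : 0 < 2 * lam := by positivity
  have hcont : Continuous fun s : ℝ => exp (s • A) * (S * Sᵀ) * exp (s • Aᵀ) := by fun_prop
  have hint := integrableOn_Ioi_of_isBigO_exp_neg (a := 0) h2lam hcont.continuousOn
      (isBigO_exp_smul_mul_mul_exp_smul_transpose hA _)
  rw [funext hP, integral_Ici_eq_integral_Ioi, ← zero_add (∫ s in Ioi (0:ℝ), _)]
  exact (tendsto_zero_of_isBigO_exp_neg h2lam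
    (isBigO_exp_smul_mul_mul_exp_smul_transpose hA P₀)).add
    (intervalIntegral_tendsto_integral_Ioi 0 hint tendsto_id)

/-- Under exponential stability of `A`, the covariance of the additive-noise model
converges to the stationary covariance appearing in the fluctuation–dissipation
relation. -/
theorem covariance_tendsto_stationary (n : ℕ) (A S P₀ : Matrix (Fin n) (Fin n) ℝ)
    (C lam : ℝ) (hC : 0 ≤ C) (hlam : 0 < lam)
    (hstab : ∀ t : ℝ, 0 ≤ t → ‖exp (t • A)‖ ≤ C * Real.exp (-lam * t))
    (P : ℝ → Matrix (Fin n) (Fin n) ℝ)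
    (hP : ∀ t : ℝ, P t =
      exp (t • A) * P₀ * exp (t • Aᵀ) +
        ∫ s in (0:ℝ)..t, exp (s • A) * (S * Sᵀ) * exp (s • Aᵀ)) :
    Tendsto P atTop
      (nhds (∫ s in Set.Ici (0:ℝ), exp (s • A) * (S * Sᵀ) * exp (s • Aᵀ))) :=
  covariance_tendsto_stationary_general n A S P₀ C lam hlam hstab P hP
end
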